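/- arXiv:2304.06262 — 3 statements merged into one kernel-verified Lean document; each statement's English description precedes it below -/
import Mathlib

section
/- Suppose H : ℝ^N → ℝ is continuously differentiable, L ∈ ℝ^{N×N} is skew-symmetric, and the sequence (x^k) satisfies the average vector field scheme (x^{k+1} - x^k)/Δt = L·∫₀¹ ∇H(t·x^{k+1} + (1-t)·x^k) dt with Δt > 0. Then H(x^{k+1}) = H(x^k) for all k, i.e. the Hamiltonian is exactly conserved by the discrete scheme. -/
/-!
By the fundamental theorem of calculus along the segment from `x k` to `x (k + 1)`, the change
`H (x (k + 1)) - H (x k)` is the inner product of the step `x (k + 1) - x k` with the averaged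
gradient `g`. The scheme makes the step equal to `Δt • L g`, and `g ⬝ᵥ L g = 0` for
skew-symmetric `L`.
-/

open Matrix MeasureTheory RealInnerProductSpace

theorem Matrix.dotProduct_mulVec_self_eq_zero_of_transpose_eq_neg {n R : Type*} [Fintype n]
    [CommRing R] [NoZeroDivisors R] [CharZero R] {L : Matrix n n R} (hL : Lᵀ = -L) (v : n → R) :
    v ⬝ᵥ (L *ᵥ v) = 0 := by
  refine CharZero.eq_neg_self_iff.mp ?_
  calc v ⬝ᵥ (L *ᵥ v) = (Lᵀ *ᵥ v) ⬝ᵥ v := by rw [dotProduct_mulVec, mulVec_transpose]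
    _ = -(v ⬝ᵥ (L *ᵥ v)) := by rw [hL, neg_mulVec, neg_dotProduct, dotProduct_comm]

theorem PiLp.ofLp_intervalIntegral {p : ENNReal} [Fact (1 ≤ p)] {ι : Type*} [Fintype ι]
    {β : ι → Type*} [∀ i, NormedAddCommGroup (β i)] [∀ i, NormedSpace ℝ (β i)]
    [∀ i, CompleteSpace (β i)] (f : ℝ → PiLp p β) (a b : ℝ) (μ : Measure ℝ) :
    WithLp.ofLp (∫ t in a..b, f t ∂μ) = ∫ t in a..b, WithLp.ofLp (f t) ∂μ := by
  have hset (s : Set ℝ) : WithLp.ofLp (∫ t in s, f t ∂μ) = ∫ t in s, WithLp.ofLp (f t) ∂μ :=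
    ((PiLp.continuousLinearEquiv p ℝ β).integral_comp_comm f).symm
  simp only [intervalIntegral, WithLp.ofLp_sub, hset]

section Segment

variable {E : Type*} [NormedAddCommGroup E] [InnerProductSpace ℝ E] [CompleteSpace E] {H : E → ℝ}

theorem ContDiff.continuous_gradient (hH : ContDiff ℝ 1 H) : Continuous (gradient H) :=
  (InnerProductSpace.toDual ℝ E).symm.continuous.comp (hH.continuous_fderiv one_ne_zero)

theorem DifferentiableAt.hasDerivAt_comp_segment {x y : E} {t : ℝ}
    (hH : DifferentiableAt ℝ H (t • y + (1 - t) • x)) :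
    HasDerivAt (fun s : ℝ ↦ H (s • y + (1 - s) • x))
      (⟪y - x, gradient H (t • y + (1 - t) • x)⟫) t := by
  have hsegment : HasDerivAt (fun s : ℝ ↦ s • y + (1 - s) • x) (y - x) t := by
    simpa [sub_eq_add_neg] using
      ((hasDerivAt_id t).smul_const y).fun_add (((hasDerivAt_id t).const_sub 1).smul_const x)
  have hchain := hH.hasFDerivAt.comp_hasDerivAt t hsegment
  rwa [← inner_gradient_left, real_inner_comm] at hchain

theorem ContDiff.sub_eq_inner_integral_gradient_segment (hH : ContDiff ℝ 1 H) (x y : E) :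
    H y - H x = ⟪y - x, (∫ t in (0 : ℝ)..1, gradient H (t • y + (1 - t) • x))⟫ := by
  have hcont : Continuous fun t : ℝ ↦ gradient H (t • y + (1 - t) • x) :=
    hH.continuous_gradient.comp (by fun_prop)
  have hinner := (innerSL ℝ (y - x)).intervalIntegral_comp_comm
    (hcont.intervalIntegrable (μ := volume) 0 1)
  simp only [innerSL_apply_apply] at hinner
  rw [← hinner, intervalIntegral.integral_eq_sub_of_hasDerivAt
      (fun t _ ↦ ((hH.differentiable one_ne_zero) _).hasDerivAt_comp_segment)
      ((continuous_const.inner hcont).intervalIntegrable 0 1)]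
  simp

end Segment

theorem avf_conservation_general {N : ℕ} (L : Matrix (Fin N) (Fin N) ℝ) (hL : Lᵀ = -L)
    (H : EuclideanSpace ℝ (Fin N) → ℝ) (hH : ContDiff ℝ 1 H)
    (Δt : ℝ) (x : ℕ → EuclideanSpace ℝ (Fin N))
    (hx : ∀ k, x (k + 1) - x k =
      Δt • (L.mulVec (∫ t in (0:ℝ)..1, (gradient H (t • x (k + 1) + (1 - t) • x k) : EuclideanSpace ℝ (Fin N))))) :
    ∀ k, H (x (k + 1)) = H (x k) := by
  intro k
  rw [← sub_eq_zero, hH.sub_eq_inner_integral_gradient_segment]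
  set g := ∫ t in (0 : ℝ)..1, gradient H (t • x (k + 1) + (1 - t) • x k)
  have hstep : WithLp.ofLp (x (k + 1) - x k) = Δt • L *ᵥ WithLp.ofLp g := by
    rw [WithLp.ofLp_sub, hx k, PiLp.ofLp_intervalIntegral]
  rw [EuclideanSpace.inner_eq_star_dotProduct, star_trivial, hstep, dotProduct_smul,
    dotProduct_mulVec_self_eq_zero_of_transpose_eq_neg hL, smul_zero]

/-- The average vector field (AVF) scheme exactly conserves the Hamiltonian. -/
theorem avf_conservation {N : ℕ} (L : Matrix (Fin N) (Fin N) ℝ) (hL : Lᵀ = -L)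
    (H : EuclideanSpace ℝ (Fin N) → ℝ) (hH : ContDiff ℝ 1 H)
    (Δt : ℝ) (hΔt : 0 < Δt) (x : ℕ → EuclideanSpace ℝ (Fin N))
    (hx : ∀ k, x (k + 1) - x k =
      Δt • (L.mulVec (∫ t in (0:ℝ)..1, (gradient H (t • x (k + 1) + (1 - t) • x k) : EuclideanSpace ℝ (Fin N))))) :
    ∀ k, H (x (k + 1)) = H (x k) :=
  avf_conservation_general L hL H hH Δt x hx
end

section
/- Let A ∈ ℝ^{N×N}, B, C ∈ ℝ^{N×n_s}, and let ε ∈ {+1, -1}. A matrix D ∈ ℝ^{N×N} with Dᵀ = ε·D is a minimizer of ‖C - A·D·B‖² subject to the constraint Dᵀ = ε·D (Frobenius norm) if and only if it satisfies the matrix equation AᵀA·D·BBᵀ + BBᵀ·D·AᵀA = AᵀCBᵀ + ε·BCᵀA. -/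
/-!
On the affine space `D + {E | Eᵀ = εE}` the objective `‖C - ADB‖²` is a convex quadratic whose
gradient at `D`, for the trace pairing `⟨X, Y⟩ = tr (XᵀY)`, is `-2G` with `G = Aᵀ(C - ADB)Bᵀ`.
So `D` is a minimizer iff `G` is orthogonal to every `ε`-symmetric `E`. Since
`2⟨G, E⟩ = ⟨G + εGᵀ, E⟩` for such `E` and `G + εGᵀ` is itself `ε`-symmetric (as `ε² = 1`),
this orthogonality means `G + εGᵀ = 0`, which expands to the stated matrix equation.
-/

open Matrix

/-- Squared Frobenius norm. -/
def frob2 {m n : ℕ} (M : Matrix (Fin m) (Fin n) ℝ) : ℝ := ∑ i, ∑ j, (M i j) ^ 2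

section Frobenius

variable {m k n : ℕ}

theorem frob2_eq_trace (M : Matrix (Fin m) (Fin n) ℝ) : frob2 M = trace (Mᵀ * M) := by
  simp only [frob2, trace, diag, mul_apply, transpose_apply, sq]
  exact Finset.sum_comm

theorem frob2_nonneg (M : Matrix (Fin m) (Fin n) ℝ) : 0 ≤ frob2 M := by
  unfold frob2
  positivity

theorem frob2_smul (t : ℝ) (M : Matrix (Fin m) (Fin n) ℝ) :
    frob2 (t • M) = t ^ 2 * frob2 M := by
  simp [frob2, Finset.mul_sum, mul_pow]

theorem frob2_sub (X Y : Matrix (Fin m) (Fin n) ℝ) :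
    frob2 (X - Y) = frob2 X - 2 * trace (Xᵀ * Y) + frob2 Y := by
  have hswap : trace (Yᵀ * X) = trace (Xᵀ * Y) := by
    rw [← trace_transpose, transpose_mul, transpose_transpose]
  simp only [frob2_eq_trace, transpose_sub, Matrix.sub_mul, Matrix.mul_sub, trace_sub, hswap]
  ring

theorem frob2_sub_mul_add_mul (A : Matrix (Fin m) (Fin k) ℝ)
    (B : Matrix (Fin k) (Fin n) ℝ) (C : Matrix (Fin m) (Fin n) ℝ)
    (D E : Matrix (Fin k) (Fin k) ℝ) :
    frob2 (C - A * (D + E) * B) =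
      frob2 (C - A * D * B) - 2 * trace ((Aᵀ * (C - A * D * B) * Bᵀ)ᵀ * E) +
        frob2 (A * E * B) := by
  set R := C - A * D * B
  have hsplit : C - A * (D + E) * B = R - A * E * B := by
    simp only [R, Matrix.mul_add, Matrix.add_mul]
    abel
  have hpair : trace (Rᵀ * (A * E * B)) = trace ((Aᵀ * R * Bᵀ)ᵀ * E) := by
    simp only [transpose_mul, transpose_transpose, Matrix.mul_assoc]
    rw [trace_mul_comm B]
    simp only [Matrix.mul_assoc]
  rw [hsplit, frob2_sub, hpair]

theorem forall_frob2_le_iff_forall_trace_eq_zero (A : Matrix (Fin m) (Fin k) ℝ)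
    (B : Matrix (Fin k) (Fin n) ℝ) (C : Matrix (Fin m) (Fin n) ℝ) {ε : ℝ}
    {D : Matrix (Fin k) (Fin k) ℝ} (hD : Dᵀ = ε • D) :
    (∀ D' : Matrix (Fin k) (Fin k) ℝ, D'ᵀ = ε • D' →
        frob2 (C - A * D * B) ≤ frob2 (C - A * D' * B)) ↔
      ∀ E : Matrix (Fin k) (Fin k) ℝ, Eᵀ = ε • E →
        trace ((Aᵀ * (C - A * D * B) * Bᵀ)ᵀ * E) = 0 := by
  set G := Aᵀ * (C - A * D * B) * Bᵀ
  constructor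
  · intro hmin E hE
    have hquad : ∀ t : ℝ,
        0 ≤ frob2 (A * E * B) * (t * t) + (-2 * trace (Gᵀ * E)) * t + 0 := by
      intro t
      have hfeas : (D + t • E)ᵀ = ε • (D + t • E) := by
        rw [transpose_add, transpose_smul, hD, hE, smul_add, smul_comm]
      have h := hmin _ hfeas
      simp only [frob2_sub_mul_add_mul, Matrix.mul_smul, Matrix.smul_mul, frob2_smul, trace_smul,
        smul_eq_mul] at h
      linarith
    have hdisc := discrim_le_zero hquad
    rw [discrim] at hdisc
    nlinarith [sq_nonneg (trace (Gᵀ * E))]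
  · intro horth D' hD'
    have hE : (D' - D)ᵀ = ε • (D' - D) := by rw [transpose_sub, hD', hD, smul_sub]
    have h := frob2_sub_mul_add_mul A B C D (D' - D)
    rw [add_sub_cancel, horth _ hE] at h
    linarith [frob2_nonneg (A * (D' - D) * B)]

end Frobenius

namespace Matrix

variable {m k n R : Type*} [CommRing R]

theorem transpose_add_smul_transpose {ε : R} (hε : ε * ε = 1) (G : Matrix n n R) :
    (G + ε • Gᵀ)ᵀ = ε • (G + ε • Gᵀ) := by
  rw [transpose_add, transpose_smul, transpose_transpose, smul_add, smul_smul, hε, one_smul,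
    add_comm]

theorem two_mul_trace_transpose_mul_of_transpose_eq_smul [Fintype n] {ε : R} (G : Matrix n n R)
    {E : Matrix n n R} (hE : Eᵀ = ε • E) :
    2 * trace (Gᵀ * E) = trace ((G + ε • Gᵀ)ᵀ * E) := by
  have hsym : trace (Gᵀ * E) = ε * trace (G * E) := by
    rw [← trace_transpose, transpose_mul, transpose_transpose, hE, Matrix.smul_mul, trace_smul,
      trace_mul_comm, smul_eq_mul]
  rw [transpose_add, transpose_smul, transpose_transpose, Matrix.add_mul, Matrix.smul_mul,
    trace_add, trace_smul, smul_eq_mul, ← hsym]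
  ring

theorem forall_trace_transpose_mul_eq_zero_iff [Fintype n] {ε : ℝ}
    (hε : ε * ε = 1) (G : Matrix n n ℝ) :
    (∀ E : Matrix n n ℝ, Eᵀ = ε • E → trace (Gᵀ * E) = 0) ↔ G + ε • Gᵀ = 0 := by
  constructor
  · intro horth
    have hpair := two_mul_trace_transpose_mul_of_transpose_eq_smul G
      (transpose_add_smul_transpose hε G)
    rw [horth _ (transpose_add_smul_transpose hε G), mul_zero, eq_comm,
      ← conjTranspose_eq_transpose_of_trivial] at hpair
    exact trace_conjTranspose_mul_self_eq_zero_iff.mp hpair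
  · intro hP E hE
    have h2 := two_mul_trace_transpose_mul_of_transpose_eq_smul G hE
    rw [hP, transpose_zero, zero_mul, trace_zero] at h2
    linarith

theorem transpose_mul_residual_add_smul_transpose [Fintype m] [Fintype k] [Fintype n] {ε : R}
    (hε : ε * ε = 1) (A : Matrix m k R) (B : Matrix k n R) (C : Matrix m n R)
    {D : Matrix k k R} (hD : Dᵀ = ε • D) :
    Aᵀ * (C - A * D * B) * Bᵀ + ε • (Aᵀ * (C - A * D * B) * Bᵀ)ᵀ =
      (Aᵀ * C * Bᵀ + ε • (B * Cᵀ * A)) - (Aᵀ * A * D * (B * Bᵀ) + B * Bᵀ * D * (Aᵀ * A)) := by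
  simp only [transpose_mul, transpose_sub, transpose_transpose, hD, Matrix.mul_sub,
    Matrix.sub_mul, smul_sub, Matrix.mul_smul, Matrix.smul_mul, smul_smul, hε, one_smul,
    Matrix.mul_assoc]
  abel

end Matrix

/-- A matrix `D` with `Dᵀ = εD` minimizes `‖C - ADB‖²` over the symmetry-constrained
set iff it satisfies `AᵀA·D·BBᵀ + BBᵀ·D·AᵀA = AᵀCBᵀ + ε·BCᵀA`. -/
theorem constrained_lsq_optimality {N ns : ℕ} (A : Matrix (Fin N) (Fin N) ℝ)
    (B C : Matrix (Fin N) (Fin ns) ℝ) (ε : ℝ) (hε : ε = 1 ∨ ε = -1)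
    (D : Matrix (Fin N) (Fin N) ℝ) (hD : Dᵀ = ε • D) :
    (∀ D' : Matrix (Fin N) (Fin N) ℝ, D'ᵀ = ε • D' →
        frob2 (C - A * D * B) ≤ frob2 (C - A * D' * B)) ↔
      Aᵀ * A * D * (B * Bᵀ) + B * Bᵀ * D * (Aᵀ * A) = Aᵀ * C * Bᵀ + ε • (B * Cᵀ * A) := by
  have hε2 : ε * ε = 1 := by rcases hε with rfl | rfl <;> norm_num
  rw [forall_frob2_le_iff_forall_trace_eq_zero A B C hD,
    forall_trace_transpose_mul_eq_zero_iff hε2,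
    transpose_mul_residual_add_smul_transpose hε2 A B C hD, sub_eq_zero, eq_comm]
end

section
/- Let X ∈ ℝ^{N×n_s} have singular value decomposition with left singular vectors U ∈ ℝ^{N×n} (columns u_1,...,u_n) and nonzero singular values σ_1,...,σ_n. Let X̂ = UᵀX and X̂_t = UᵀX_t for some X_t ∈ ℝ^{N×n_s}. Then the unique minimizer of ‖X̂_t - D·X̂‖² over D ∈ ℝ^{n×n} is D̂ = X̂_t·X̂ᵀ·Σ^{-2}, where Σ = diag(σ_1,...,σ_n). Moreover, for any n' < n, the top-left n'×n' submatrix of D̂ is the unique minimizer of the corresponding problem of size n'. -/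
open Matrix

/-- The inferred operator `D̂ = X̂ₜ X̂ᵀ Σ⁻²`. -/
noncomputable def Dhat {N n ns : ℕ} (U : Matrix (Fin N) (Fin n) ℝ)
    (X Xt : Matrix (Fin N) (Fin ns) ℝ) (σ : Fin n → ℝ) : Matrix (Fin n) (Fin n) ℝ :=
  (Uᵀ * Xt) * (Uᵀ * X)ᵀ * Matrix.diagonal fun i => (σ i ^ 2)⁻¹

lemma frob2_sub_s10 {m k : ℕ} (A B : Matrix (Fin m) (Fin k) ℝ) :
    frob2 (A - B) = frob2 A - 2 * (∑ i, ∑ j, A i j * B i j) + frob2 B := by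
  unfold frob2
  rw [Finset.mul_sum, ← Finset.sum_sub_distrib, ← Finset.sum_add_distrib]
  refine Finset.sum_congr rfl fun i _ => ?_
  rw [Finset.mul_sum, ← Finset.sum_sub_distrib, ← Finset.sum_add_distrib]
  refine Finset.sum_congr rfl fun j _ => ?_
  simp [Matrix.sub_apply]; ring

lemma dot_eq_trace {m k : ℕ} (A B : Matrix (Fin m) (Fin k) ℝ) :
    (∑ i, ∑ j, A i j * B i j) = Matrix.trace (A * Bᵀ) := by
  simp [Matrix.trace, Matrix.mul_apply, Matrix.diag]

lemma key {k ns : ℕ} (Y Z : Matrix (Fin k) (Fin ns) ℝ) (σ : Fin k → ℝ) (hσ : ∀ i, 0 < σ i)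
    (hZZ : Z * Zᵀ = Matrix.diagonal fun i => σ i ^ 2)
    (D : Matrix (Fin k) (Fin k) ℝ)
    (hD : D ≠ Y * Zᵀ * Matrix.diagonal fun i => (σ i ^ 2)⁻¹) :
    frob2 (Y - (Y * Zᵀ * Matrix.diagonal fun i => (σ i ^ 2)⁻¹) * Z) < frob2 (Y - D * Z) := by
  set Dh : Matrix (Fin k) (Fin k) ℝ := Y * Zᵀ * Matrix.diagonal fun i => (σ i ^ 2)⁻¹ with hDh
  set E := D - Dh with hEdef
  have hE : E ≠ 0 := sub_ne_zero.mpr hD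
  have hdiag : (Matrix.diagonal fun i : Fin k => (σ i ^ 2)⁻¹) *
      (Matrix.diagonal fun i : Fin k => σ i ^ 2) = 1 := by
    rw [Matrix.diagonal_mul_diagonal]
    have h2 : (fun i => (σ i ^ 2)⁻¹ * σ i ^ 2) = fun _ : Fin k => (1 : ℝ) :=
      funext fun i => inv_mul_cancel₀ (pow_pos (hσ i) 2).ne'
    rw [h2, Matrix.diagonal_one]
  have hA : (Y - Dh * Z) * Zᵀ = 0 := by
    rw [Matrix.sub_mul, hDh, Matrix.mul_assoc (Y * Zᵀ * _), hZZ,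
      Matrix.mul_assoc (Y * Zᵀ), hdiag, Matrix.mul_one, sub_self]
  have hsplit : Y - D * Z = (Y - Dh * Z) - E * Z := by
    rw [hEdef, Matrix.sub_mul]; abel
  rw [hsplit, frob2_sub_s10 (Y - Dh * Z) (E * Z), dot_eq_trace]
  have hcross : (Y - Dh * Z) * (E * Z)ᵀ = 0 := by
    rw [Matrix.transpose_mul, ← Matrix.mul_assoc, hA, Matrix.zero_mul]
  rw [hcross]
  simp only [Matrix.trace_zero, mul_zero, sub_zero]
  have hpos : 0 < frob2 (E * Z) := by
    have hfe : frob2 (E * Z) = Matrix.trace (E * Matrix.diagonal (fun i => σ i ^ 2) * Eᵀ) := by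
      rw [← hZZ]
      have h0 : frob2 (E * Z) = ∑ i, ∑ j, (E * Z) i j * (E * Z) i j := by
        simp [frob2, sq]
      rw [h0, dot_eq_trace, Matrix.transpose_mul, ← Matrix.mul_assoc, Matrix.mul_assoc E Z]
    rw [hfe]
    have htr : Matrix.trace (E * Matrix.diagonal (fun i => σ i ^ 2) * Eᵀ) =
        ∑ i, ∑ j, E i j ^ 2 * σ j ^ 2 := by
      simp only [Matrix.trace, Matrix.diag, Matrix.mul_apply, Matrix.transpose_apply,
        Matrix.diagonal_apply, mul_ite, mul_zero, ite_mul, zero_mul,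
        Finset.sum_ite_eq, Finset.sum_ite_eq', Finset.mem_univ, if_true]
      refine Finset.sum_congr rfl fun i _ => Finset.sum_congr rfl fun j _ => by ring
    rw [htr]
    obtain ⟨i, j, hij⟩ : ∃ i j, E i j ≠ 0 := by
      by_contra h
      push_neg at h
      exact hE (by ext i j; exact h i j)
    refine Finset.sum_pos' (fun i _ => Finset.sum_nonneg fun j _ => by positivity)
      ⟨i, Finset.mem_univ i, ?_⟩
    refine Finset.sum_pos' (fun j _ => by positivity) ⟨j, Finset.mem_univ j, ?_⟩
    have h1 : 0 < E i j ^ 2 := by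
      rw [← sq_abs]
      exact pow_pos (abs_pos.mpr hij) 2
    exact mul_pos h1 (pow_pos (hσ j) 2)
  linarith

/-- With a POD basis, `D̂ = X̂ₜ X̂ᵀ Σ⁻²` is the unique minimizer of `‖X̂ₜ - D X̂‖²`, and its
leading `n' × n'` submatrix is the unique minimizer of the size-`n'` problem. -/
theorem opinf_truncation {N n ns n' : ℕ} (hn' : n' < n)
    (X Xt : Matrix (Fin N) (Fin ns) ℝ) (U : Matrix (Fin N) (Fin n) ℝ)
    (hU : Uᵀ * U = 1) (σ : Fin n → ℝ) (hσ : ∀ i, 0 < σ i)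
    (hXXt : Uᵀ * X * (Uᵀ * X)ᵀ = Matrix.diagonal fun i => σ i ^ 2) :
    (∀ D : Matrix (Fin n) (Fin n) ℝ, D ≠ Dhat U X Xt σ →
        frob2 (Uᵀ * Xt - Dhat U X Xt σ * (Uᵀ * X)) < frob2 (Uᵀ * Xt - D * (Uᵀ * X))) ∧
      (∀ D : Matrix (Fin n') (Fin n') ℝ,
        D ≠ (Dhat U X Xt σ).submatrix (Fin.castLE hn'.le) (Fin.castLE hn'.le) →
        frob2 ((U.submatrix id (Fin.castLE hn'.le))ᵀ * Xt -
            (Dhat U X Xt σ).submatrix (Fin.castLE hn'.le) (Fin.castLE hn'.le) *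
              ((U.submatrix id (Fin.castLE hn'.le))ᵀ * X)) <
          frob2 ((U.submatrix id (Fin.castLE hn'.le))ᵀ * Xt -
            D * ((U.submatrix id (Fin.castLE hn'.le))ᵀ * X))) := by
  constructor
  · intro D hD
    exact key (Uᵀ * Xt) (Uᵀ * X) σ hσ hXXt D hD
  · intro D hD
    set c := Fin.castLE hn'.le with hc
    set V := U.submatrix id c with hV
    have hVM : ∀ M : Matrix (Fin N) (Fin ns) ℝ, Vᵀ * M = (Uᵀ * M).submatrix c id := by
      intro M
      ext i j
      simp [Matrix.mul_apply, hV]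
    have hZZ' : (Vᵀ * X) * (Vᵀ * X)ᵀ = Matrix.diagonal fun i => σ (c i) ^ 2 := by
      ext i j
      have h1 : ((Uᵀ * X) * (Uᵀ * X)ᵀ) (c i) (c j) =
          Matrix.diagonal (fun i => σ i ^ 2) (c i) (c j) := by rw [hXXt]
      simp only [Matrix.mul_apply, Matrix.transpose_apply, hVM, Matrix.submatrix_apply,
        id_eq] at h1 ⊢
      rw [h1]
      by_cases h : i = j
      · simp [h]
      · rw [Matrix.diagonal_apply_ne _ (fun hcc => h ((Fin.castLE_injective _) hcc)),
          Matrix.diagonal_apply_ne _ h]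
    have hDsub : (Dhat U X Xt σ).submatrix c c =
        (Vᵀ * Xt) * (Vᵀ * X)ᵀ * Matrix.diagonal fun i => (σ (c i) ^ 2)⁻¹ := by
      ext i j
      rw [Matrix.submatrix_apply]
      simp only [Dhat, Matrix.mul_diagonal]
      have hs : ((Uᵀ * Xt) * (Uᵀ * X)ᵀ) (c i) (c j) = ((Vᵀ * Xt) * (Vᵀ * X)ᵀ) i j := by
        simp [Matrix.mul_apply, hVM]
      rw [hs]
    rw [hDsub] at hD ⊢
    exact key (Vᵀ * Xt) (Vᵀ * X) (fun i => σ (c i)) (fun i => hσ (c i)) hZZ' D hD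
end
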